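/- Let A be a nonnegative n×n tubal matrix (with n ≥ 2). Then A is irreducible if and only if (A + I)^{n-1}, the (n-1)-fold t-product power of A + I, is a positive tubal matrix, i.e., every tubal scalar entry of (A + I)^{n-1} is nonnegative and nonzero. -/
import Mathlib


open Finset

/-- The t-product (circular convolution) of tubal scalars of length `p`. -/
def tConv {p : ℕ} (a b : Fin p → ℝ) : Fin p → ℝ :=
  fun i => ∑ j : Fin p, a j * b (i - j)

/-- A tubal scalar is nonnegative if every entry is nonnegative. -/
def TNonneg {p : ℕ} (a : Fin p → ℝ) : Prop := ∀ i, 0 ≤ a i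

/-- A tubal scalar is positive if it is nonnegative and not identically zero. -/
def TPos {p : ℕ} (a : Fin p → ℝ) : Prop := TNonneg a ∧ a ≠ 0

/-- The t-product of two tubal matrices: `(A*B)_{ik} = Σ_j a_{ij} * b_{jk}`. -/
def tMatMul {n p : ℕ} (A B : Fin n → Fin n → Fin p → ℝ) : Fin n → Fin n → Fin p → ℝ :=
  fun i k => ∑ j : Fin n, tConv (A i j) (B j k)

/-- The identity tubal matrix: `e = (1,0,…,0)` on the diagonal, `0` elsewhere. -/
def tIdMat (n p : ℕ) [NeZero p] : Fin n → Fin n → Fin p → ℝ :=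
  fun i j k => if i = j ∧ k = 0 then 1 else 0

/-- `m`-fold t-product power of a tubal matrix. -/
def tMatPow {n p : ℕ} [NeZero p] (A : Fin n → Fin n → Fin p → ℝ) : ℕ → Fin n → Fin n → Fin p → ℝ
  | 0 => tIdMat n p
  | m + 1 => tMatMul A (tMatPow A m)

/-- A tubal matrix is reducible if some nonempty proper index set `I` satisfies
`a_{ij} = 0` for all `i ∈ I`, `j ∉ I`. -/
def TReducible {n p : ℕ} (A : Fin n → Fin n → Fin p → ℝ) : Prop :=
  ∃ I : Finset (Fin n), I.Nonempty ∧ I ≠ Finset.univ ∧ ∀ i ∈ I, ∀ j ∉ I, A i j = 0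

section AuxLemmas

variable {n p : ℕ}

lemma tConv_nonneg' {a b : Fin p → ℝ} (ha : TNonneg a) (hb : TNonneg b) :
    TNonneg (tConv a b) := fun i => Finset.sum_nonneg fun j _ => mul_nonneg (ha j) (hb _)

lemma tConv_sum [NeZero p] (a b : Fin p → ℝ) :
    ∑ k, tConv a b k = (∑ k, a k) * (∑ k, b k) := by
  unfold tConv
  rw [Finset.sum_comm, Finset.sum_mul]
  refine Finset.sum_congr rfl fun j _ => ?_
  rw [Finset.mul_sum]
  exact Fintype.sum_equiv (Equiv.subRight j) _ _ fun k => rfl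

lemma ne_zero_iff_sum_pos {a : Fin p → ℝ} (ha : TNonneg a) :
    a ≠ 0 ↔ 0 < ∑ k, a k := by
  constructor
  · intro h
    rcases (Finset.sum_nonneg fun k _ => ha k).lt_or_eq with hlt | heq
    · exact hlt
    · exfalso; apply h; funext k
      exact (Finset.sum_eq_zero_iff_of_nonneg fun k _ => ha k).1 heq.symm k (Finset.mem_univ k)
  · intro h h0
    rw [h0] at h; simp at h

lemma matPowNN {M : Matrix (Fin n) (Fin n) ℝ} (hM : ∀ i j, 0 ≤ M i j) :
    ∀ m i j, 0 ≤ (M ^ m) i j := by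
  intro m
  induction m with
  | zero => intro i j; rw [pow_zero, Matrix.one_apply]; split <;> norm_num
  | succ m ih =>
    intro i j
    rw [pow_succ, Matrix.mul_apply]
    exact Finset.sum_nonneg fun l _ => mul_nonneg (ih i l) (hM l j)

lemma matPowZero {M : Matrix (Fin n) (Fin n) ℝ} (I : Finset (Fin n))
    (hI : ∀ i ∈ I, ∀ j ∉ I, M i j = 0) :
    ∀ m, ∀ i ∈ I, ∀ j ∉ I, (M ^ m) i j = 0 := by
  intro m
  induction m with
  | zero =>
    intro i hi j hj
    rw [pow_zero, Matrix.one_apply_ne]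
    rintro rfl; exact hj hi
  | succ m ih =>
    intro i hi j hj
    rw [pow_succ', Matrix.mul_apply]
    apply Finset.sum_eq_zero
    intro l _
    by_cases hl : l ∈ I
    · rw [ih l hl j hj, mul_zero]
    · rw [hI i hi l hl, zero_mul]

lemma matKey (hn : 1 ≤ n) (M : Matrix (Fin n) (Fin n) ℝ) (hM : ∀ i j, 0 ≤ M i j)
    (hd : ∀ i, 0 < M i i)
    (hirr : ∀ I : Finset (Fin n), I.Nonempty → I ≠ Finset.univ → ∃ i ∈ I, ∃ j ∉ I, M i j ≠ 0) :
    ∀ i j, 0 < (M ^ (n - 1)) i j := by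
  intro i j
  set S : ℕ → Finset (Fin n) := fun m => Finset.univ.filter (fun l => 0 < (M ^ m) i l) with hS
  have hmem : ∀ m l, l ∈ S m ↔ 0 < (M ^ m) i l := by
    intro m l; simp [hS]
  have mono : ∀ m, S m ⊆ S (m + 1) := by
    intro m l hl
    rw [hmem] at hl ⊢
    rw [pow_succ, Matrix.mul_apply]
    exact Finset.sum_pos' (fun x _ => mul_nonneg (matPowNN hM m i x) (hM x l))
      ⟨l, Finset.mem_univ l, mul_pos hl (hd l)⟩
  have hiS : ∀ m, i ∈ S m := by
    intro m
    induction m with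
    | zero => rw [hmem, pow_zero, Matrix.one_apply_eq]; norm_num
    | succ m ih => exact mono m ih
  have grow : ∀ m, S m ≠ Finset.univ → S m ⊂ S (m + 1) := by
    intro m hne
    obtain ⟨a, ha, b, hb, hab⟩ := hirr (S m) ⟨i, hiS m⟩ hne
    refine (Finset.ssubset_iff_of_subset (mono m)).2 ⟨b, ?_, hb⟩
    rw [hmem, pow_succ, Matrix.mul_apply]
    exact Finset.sum_pos' (fun x _ => mul_nonneg (matPowNN hM m i x) (hM x b))
      ⟨a, Finset.mem_univ a, mul_pos ((hmem m a).1 ha) (lt_of_le_of_ne (hM a b) (Ne.symm hab))⟩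
  have card : ∀ m, m + 1 ≤ (S m).card ∨ S m = Finset.univ := by
    intro m
    induction m with
    | zero => left; exact Finset.card_pos.2 ⟨i, hiS 0⟩
    | succ m ih =>
      by_cases hu : S m = Finset.univ
      · right
        exact Finset.univ_subset_iff.1 (hu ▸ mono m)
      · rcases ih with h | h
        · left
          have := Finset.card_lt_card (grow m hu)
          omega
        · exact absurd h hu
  have huniv : S (n - 1) = Finset.univ := by
    rcases card (n - 1) with h | h
    · have h1 : (S (n - 1)).card ≤ Fintype.card (Fin n) := Finset.card_le_univ _
      rw [Fintype.card_fin] at h1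
      have hcard : (S (n - 1)).card = n := by omega
      exact Finset.eq_univ_of_card _ (by rw [hcard, Fintype.card_fin])
    · exact h
  exact (hmem _ j).1 (by rw [huniv]; exact Finset.mem_univ j)

end AuxLemmas

/-- A nonnegative `n×n` tubal matrix `A` (with `n ≥ 2`) is irreducible iff every
tubal scalar entry of `(A + I)^(n-1)` is positive. -/
theorem irreducible_iff_pow_pos {n p : ℕ} [NeZero p] (hn : 2 ≤ n)
    (A : Fin n → Fin n → Fin p → ℝ) (hA : ∀ i j, TNonneg (A i j)) :
    ¬ TReducible A ↔
      ∀ i j, TPos (tMatPow (fun i j => A i j + tIdMat n p i j) (n - 1) i j) := by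
  set B : Fin n → Fin n → Fin p → ℝ := fun i j => A i j + tIdMat n p i j with hB
  have hIdnn : ∀ (i j : Fin n), TNonneg (tIdMat n p i j) := by
    intro i j k
    unfold tIdMat
    split <;> norm_num
  have hBnn : ∀ i j, TNonneg (B i j) := by
    intro i j k
    exact add_nonneg (hA i j k) (hIdnn i j k)
  have powNNT : ∀ m i j, TNonneg (tMatPow B m i j) := by
    intro m
    induction m with
    | zero => exact hIdnn
    | succ m ih =>
      intro i j k
      show 0 ≤ tMatMul B (tMatPow B m) i j k
      unfold tMatMul
      rw [Finset.sum_apply]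
      exact Finset.sum_nonneg fun l _ => tConv_nonneg' (hBnn i l) (ih l j) k
  set M : Matrix (Fin n) (Fin n) ℝ := Matrix.of (fun i j => ∑ k, B i j k) with hM
  have hMapp : ∀ i j, M i j = ∑ k, B i j k := fun i j => rfl
  have hIdsum : ∀ i j : Fin n, (∑ k, tIdMat n p i j k) = if i = j then 1 else 0 := by
    intro i j
    unfold tIdMat
    by_cases h : i = j
    · subst h; simp
    · simp [h]
  have sumPow : ∀ m i j, ∑ k, tMatPow B m i j k = (M ^ m) i j := by
    intro m
    induction m with
    | zero =>
      intro i j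
      show (∑ k, tIdMat n p i j k) = (M ^ 0) i j
      rw [hIdsum, pow_zero, Matrix.one_apply]
    | succ m ih =>
      intro i j
      show (∑ k, tMatMul B (tMatPow B m) i j k) = (M ^ (m + 1)) i j
      unfold tMatMul
      rw [pow_succ', Matrix.mul_apply]
      calc (∑ k, (∑ l, tConv (B i l) (tMatPow B m l j)) k)
          = ∑ k, ∑ l, tConv (B i l) (tMatPow B m l j) k := by
            refine Finset.sum_congr rfl fun k _ => ?_
            rw [Finset.sum_apply]
        _ = ∑ l, ∑ k, tConv (B i l) (tMatPow B m l j) k := Finset.sum_comm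
        _ = ∑ l, M i l * (M ^ m) l j := by
            refine Finset.sum_congr rfl fun l _ => ?_
            rw [tConv_sum, hMapp, ih l j]
  have hMnn : ∀ i j, 0 ≤ M i j := by
    intro i j
    rw [hMapp]
    exact Finset.sum_nonneg fun k _ => hBnn i j k
  have hMsplit : ∀ i j, M i j = (∑ k, A i j k) + (if i = j then 1 else 0) := by
    intro i j
    rw [hMapp, ← hIdsum i j, ← Finset.sum_add_distrib]
    rfl
  have hMd : ∀ i, 0 < M i i := by
    intro i
    rw [hMsplit i i, if_pos rfl]
    have : 0 ≤ ∑ k, A i i k := Finset.sum_nonneg fun k _ => hA i i k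
    linarith
  constructor
  · intro h i j
    refine ⟨powNNT (n - 1) i j, ?_⟩
    rw [ne_zero_iff_sum_pos (powNNT (n - 1) i j), sumPow]
    refine matKey (by omega) M hMnn hMd ?_ i j
    intro I hne hnu
    by_contra hc
    push_neg at hc
    apply h
    refine ⟨I, hne, hnu, fun a ha b hb => ?_⟩
    have hab : a ≠ b := by rintro rfl; exact hb ha
    have hMab : M a b = 0 := hc a ha b hb
    rw [hMsplit, if_neg hab, add_zero] at hMab
    funext k
    exact (Finset.sum_eq_zero_iff_of_nonneg fun k _ => hA a b k).1 hMab k (Finset.mem_univ k)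
  · intro h
    rintro ⟨I, hne, hnu, hz⟩
    obtain ⟨i, hi⟩ := hne
    obtain ⟨j, hj⟩ : ∃ j, j ∉ I := by
      by_contra hc
      push_neg at hc
      exact hnu (Finset.eq_univ_iff_forall.2 hc)
    have hMI : ∀ a ∈ I, ∀ b ∉ I, M a b = 0 := by
      intro a ha b hb
      have hab : a ≠ b := by rintro rfl; exact hb ha
      rw [hMsplit, if_neg hab, add_zero, hz a ha b hb]
      simp
    have h0 : (M ^ (n - 1)) i j = 0 := matPowZero I hMI (n - 1) i hi j hj
    obtain ⟨hnn, hne0⟩ := h i j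
    apply hne0
    funext k
    have hsum : ∑ k, tMatPow B (n - 1) i j k = 0 := by rw [sumPow]; exact h0
    exact (Finset.sum_eq_zero_iff_of_nonneg fun k _ => hnn k).1 hsum k (Finset.mem_univ k)
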